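/- Let 0 < d < D be integers and r, w > 0 satisfy r²/(d+2) ≥ w²/(D−d+2). Identify ℝ^D = ℝ^d × ℝ^{D−d} and let C = {(y₁,y₂) : ‖y₁‖ ≤ r, ‖y₂‖ ≤ w}. Then the infimum over all d-dimensional affine subspaces L of ℝ^D of ∫_C dist(y,L)² dy equals ((D−d)/(D−d+2)) · w² · vol(C); in particular the axis L₁ = ℝ^d × {0} is a best-fit d-flat to C in the least-squares sense. -/

import Mathlib

/-!
The cylinder is invariant under every coordinate reflection, so its second-moment matrix is
diagonal: by Fubini and polar coordinates on the two ball factors, the diagonal entries are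
`r²/(d+2) · vol C` on the axis coordinates and `w²/(D-d+2) · vol C` on the others, and the balance
hypothesis makes the latter the smallest. If `L` is a `d`-flat through `p` and `b₁, …, b_{D-d}` is
an orthonormal basis of its normal space, Bessel's inequality gives
`dist(y, L)² ≥ ∑ⱼ ⟪bⱼ, y - p⟫²`, and central symmetry of the cylinder gives
`∫_C ⟪b, y - p⟫² ≥ ∫_C ⟪b, y⟫² ≥ w²/(D-d+2) · vol C` for every unit vector `b`. Summing over `j`
bounds the integral for `L` from below by `(D-d)/(D-d+2) · w² · vol C`, which is exactly the
integral for the axis, where `dist(y, L₁)²` is the sum of the last `D - d` squared coordinates.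
-/

open MeasureTheory Metric

/-- The solid cylinder in `ℝ^D` (identified coordinatewise with `ℝ^d × ℝ^{D-d}`) of axis
radius `r` (in the first `d` coordinates) and cross-sectional radius `w` (in the remaining
`D - d` coordinates). -/
def cylinder (d D : ℕ) (r w : ℝ) : Set (EuclideanSpace ℝ (Fin D)) :=
  {y | (∑ i ∈ Finset.univ.filter (fun i : Fin D => (i : ℕ) < d), (y i) ^ 2) ≤ r ^ 2 ∧
       (∑ i ∈ Finset.univ.filter (fun i : Fin D => d ≤ (i : ℕ)), (y i) ^ 2) ≤ w ^ 2}

open Module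

open scoped RealInnerProductSpace

theorem setIntegral_eq_zero_of_comp_eq_neg {α : Type*} [MeasurableSpace α] {μ : Measure α}
    {f : α ≃ᵐ α} (hf : MeasurePreserving f μ μ) {s : Set α} (hs : f ⁻¹' s = s) {g : α → ℝ}
    (hg : ∀ x, g (f x) = -g x) : ∫ x in s, g x ∂μ = 0 := by
  have h := hf.setIntegral_preimage_emb f.measurableEmbedding g s
  simp only [hs, hg, integral_neg] at h
  linarith

section InnerProductSpace

variable {E : Type*} [NormedAddCommGroup E] [InnerProductSpace ℝ E]

theorem sum_inner_sq_le_infDist_sq {κ : Type*} [Fintype κ] {b : κ → E} (hb : Orthonormal ℝ b)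
    {L : AffineSubspace ℝ E} (hbL : ∀ k, b k ∈ L.directionᗮ) {p : E} (hp : p ∈ L) (y : E) :
    ∑ k, ⟪b k, y - p⟫ ^ 2 ≤ infDist y L ^ 2 := by
  have hsum : 0 ≤ ∑ k, ⟪b k, y - p⟫ ^ 2 := by positivity
  suffices √(∑ k, ⟪b k, y - p⟫ ^ 2) ≤ infDist y L by
    simpa [Real.sq_sqrt hsum] using pow_le_pow_left₀ (Real.sqrt_nonneg _) this 2
  refine (le_infDist ⟨p, hp⟩).2 fun z hz => ?_
  have hshift : ∀ k, ⟪b k, y - p⟫ = ⟪b k, y - z⟫ := fun k => by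
    have : ⟪z - p, b k⟫ = 0 :=
      Submodule.inner_right_of_mem_orthogonal (AffineSubspace.vsub_mem_direction hz hp) (hbL k)
    rw [real_inner_comm] at this
    rw [← sub_add_sub_cancel y z p, inner_add_right, this, add_zero]
  calc √(∑ k, ⟪b k, y - p⟫ ^ 2) ≤ √(‖y - z‖ ^ 2) := by
        refine Real.sqrt_le_sqrt ?_
        simpa [hshift, sq_abs] using hb.sum_inner_products_le (y - z) (s := Finset.univ)
    _ = dist y z := by rw [Real.sqrt_sq (norm_nonneg _), dist_eq_norm]

variable [MeasurableSpace E] [BorelSpace E] {μ : Measure E} [IsFiniteMeasureOnCompacts μ]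

theorem setIntegral_inner_sub_sq [μ.IsNegInvariant] {s : Set E} (hs : IsCompact s)
    (hneg : -s = s) (v p : E) :
    ∫ y in s, ⟪v, y - p⟫ ^ 2 ∂μ = ∫ y in s, ⟪v, y⟫ ^ 2 ∂μ + ⟪v, p⟫ ^ 2 * μ.real s := by
  have hodd : ∫ y in s, ⟪v, y⟫ ∂μ = 0 :=
    setIntegral_eq_zero_of_comp_eq_neg (f := MeasurableEquiv.neg E)
      (Measure.measurePreserving_neg μ) hneg (fun y => inner_neg_right v y)
  have hint : ∀ {f : E → ℝ}, Continuous f → IntegrableOn f s μ :=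
    fun hf => hf.continuousOn.integrableOn_compact hs
  have hexpand : ∀ y, ⟪v, y - p⟫ ^ 2 = ⟪v, y⟫ ^ 2 - 2 * ⟪v, p⟫ * ⟪v, y⟫ + ⟪v, p⟫ ^ 2 := fun y => by
    rw [inner_sub_right]; ring
  simp only [hexpand]
  rw [integral_add (hint (by fun_prop)) (hint continuous_const),
    integral_sub (hint (by fun_prop)) (hint (by fun_prop)), integral_const_mul, hodd,
    setIntegral_const, smul_eq_mul]
  ring

end InnerProductSpace

theorem setIntegral_closedBall_norm_sq {E : Type*} [NormedAddCommGroup E] [NormedSpace ℝ E]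
    [FiniteDimensional ℝ E] [Nontrivial E] [MeasurableSpace E] [BorelSpace E]
    (μ : Measure E) [μ.IsAddHaarMeasure] {R : ℝ} (hR : 0 ≤ R) :
    ∫ x in closedBall 0 R, ‖x‖ ^ 2 ∂μ
      = finrank ℝ E / (finrank ℝ E + 2) * R ^ 2 * μ.real (closedBall 0 R) := by
  set n := finrank ℝ E
  have hn : 1 ≤ n := finrank_pos
  have hradial : ∫ y in Set.Ioi (0 : ℝ), y ^ (n - 1) • (if y ≤ R then y ^ 2 else 0)
      = R ^ (n + 2) / (n + 2) := by
    have hpow : ∀ y ∈ Set.Ioi (0 : ℝ), y ^ (n - 1) • (if y ≤ R then y ^ 2 else 0)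
        = (Set.Ioc 0 R).indicator (· ^ (n + 1)) y := by
      intro y (hy : 0 < y)
      by_cases h : y ≤ R
      · rw [Set.indicator_of_mem (show y ∈ Set.Ioc 0 R from ⟨hy, h⟩), if_pos h, smul_eq_mul,
          ← pow_add]
        congr 1; omega
      · simp [h]
    rw [setIntegral_congr_fun measurableSet_Ioi hpow, setIntegral_indicator measurableSet_Ioc,
      Set.inter_eq_self_of_subset_right Set.Ioc_subset_Ioi_self,
      ← intervalIntegral.integral_of_le hR, integral_pow]
    simp
    ring
  have hball : μ.real (closedBall 0 R) = R ^ n * μ.real (ball 0 1) := by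
    rw [measureReal_def, Measure.addHaar_closedBall μ _ hR, ENNReal.toReal_mul,
      ENNReal.toReal_ofReal (by positivity), measureReal_def]
  rw [← integral_indicator measurableSet_closedBall]
  calc ∫ x, (closedBall 0 R).indicator (‖·‖ ^ 2) x ∂μ
      = ∫ x, (fun y : ℝ => if y ≤ R then y ^ 2 else 0) ‖x‖ ∂μ := by
        congr 1; ext x
        by_cases hx : ‖x‖ ≤ R <;> simp [hx]
    _ = _ := by
        rw [integral_fun_norm_addHaar μ (fun y : ℝ => if y ≤ R then y ^ 2 else 0), hradial, hball,
          nsmul_eq_mul, smul_eq_mul, pow_add]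
        ring

section LinearIsometry

variable {E : Type*} [NormedAddCommGroup E] [InnerProductSpace ℝ E] [FiniteDimensional ℝ E]
  [MeasurableSpace E] [BorelSpace E]

theorem LinearIsometryEquiv.setIntegral_closedBall_comp (f : E ≃ₗᵢ[ℝ] E) (g : E → ℝ) (R : ℝ) :
    ∫ x in closedBall 0 R, g (f x) = ∫ x in closedBall 0 R, g x := by
  simpa using f.measurePreserving.setIntegral_preimage_emb
    f.toMeasurableEquiv.measurableEmbedding g (closedBall 0 R)

end LinearIsometry

namespace EuclideanSpace

section ProdSubtype

variable {ι : Type*} (p : ι → Prop) [DecidablePred p]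

noncomputable def measurableEquivProdSubtype :
    EuclideanSpace ℝ ι ≃ᵐ EuclideanSpace ℝ {i // p i} × EuclideanSpace ℝ {i // ¬p i} :=
  (MeasurableEquiv.toLp 2 (ι → ℝ)).symm.trans <|
    (MeasurableEquiv.piEquivPiSubtypeProd (fun _ => ℝ) p).trans <|
      (MeasurableEquiv.toLp 2 _).prodCongr (MeasurableEquiv.toLp 2 _)

@[simp]
theorem measurableEquivProdSubtype_fst_apply (y : EuclideanSpace ℝ ι) (i : {i // p i}) :
    (measurableEquivProdSubtype p y).1 i = y i := rfl

@[simp]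
theorem measurableEquivProdSubtype_snd_apply (y : EuclideanSpace ℝ ι) (i : {i // ¬p i}) :
    (measurableEquivProdSubtype p y).2 i = y i := rfl

variable [Fintype ι]

theorem measurePreserving_measurableEquivProdSubtype :
    MeasurePreserving (measurableEquivProdSubtype p) :=
  (((PiLp.volume_preserving_toLp _).prod (PiLp.volume_preserving_toLp _)).comp
    (volume_preserving_piEquivPiSubtypeProd (fun _ => ℝ) p)).comp
    (PiLp.volume_preserving_ofLp ι)

variable {p}

theorem volume_preimage_measurableEquivProdSubtype_prod {A : Set (EuclideanSpace ℝ {i // p i})}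
    {B : Set (EuclideanSpace ℝ {i // ¬p i})} (hA : MeasurableSet A) (hB : MeasurableSet B) :
    volume (measurableEquivProdSubtype p ⁻¹' A ×ˢ B) = volume A * volume B := by
  rw [(measurePreserving_measurableEquivProdSubtype p).measure_preimage
    (hA.prod hB).nullMeasurableSet, Measure.volume_eq_prod, Measure.prod_prod]

theorem setIntegral_preimage_measurableEquivProdSubtype_fst (A : Set (EuclideanSpace ℝ {i // p i}))
    (B : Set (EuclideanSpace ℝ {i // ¬p i})) (f : EuclideanSpace ℝ {i // p i} → ℝ) :
    ∫ y in measurableEquivProdSubtype p ⁻¹' A ×ˢ B, f (measurableEquivProdSubtype p y).1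
      = (∫ x in A, f x) * volume.real B := by
  rw [(measurePreserving_measurableEquivProdSubtype p).setIntegral_preimage_emb
    (measurableEquivProdSubtype p).measurableEmbedding (fun z => f z.1), Measure.volume_eq_prod]
  simpa using setIntegral_prod_mul (μ := volume) (ν := volume) f (fun _ => (1 : ℝ)) A B

theorem setIntegral_preimage_measurableEquivProdSubtype_snd (A : Set (EuclideanSpace ℝ {i // p i}))
    (B : Set (EuclideanSpace ℝ {i // ¬p i})) (g : EuclideanSpace ℝ {i // ¬p i} → ℝ) :
    ∫ y in measurableEquivProdSubtype p ⁻¹' A ×ˢ B, g (measurableEquivProdSubtype p y).2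
      = volume.real A * ∫ x in B, g x := by
  rw [(measurePreserving_measurableEquivProdSubtype p).setIntegral_preimage_emb
    (measurableEquivProdSubtype p).measurableEmbedding (fun z => g z.2), Measure.volume_eq_prod]
  simpa using setIntegral_prod_mul (μ := volume) (ν := volume) (fun _ => (1 : ℝ)) g A B

end ProdSubtype

variable {ι : Type*} [Fintype ι]

theorem sum_sq_le_sq_iff_mem_closedBall (x : EuclideanSpace ℝ ι) (r : ℝ) :
    ∑ i, x i ^ 2 ≤ r ^ 2 ↔ x ∈ closedBall 0 |r| := by
  rw [mem_closedBall_zero_iff, ← abs_norm, ← sq_le_sq, norm_sq_eq]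
  simp

variable [DecidableEq ι]

theorem setIntegral_closedBall_sq_apply_eq (R : ℝ) (i j : ι) :
    ∫ x in closedBall (0 : EuclideanSpace ℝ ι) R, x i ^ 2
      = ∫ x in closedBall (0 : EuclideanSpace ℝ ι) R, x j ^ 2 := by
  rw [← (LinearIsometryEquiv.piLpCongrLeft 2 ℝ ℝ (Equiv.swap i j)).setIntegral_closedBall_comp]
  simp [Equiv.piCongrLeft', Equiv.swap_apply_left]

theorem setIntegral_closedBall_sq_apply {R : ℝ} (hR : 0 ≤ R) (i : ι) :
    ∫ x in closedBall (0 : EuclideanSpace ℝ ι) R, x i ^ 2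
      = R ^ 2 / (Fintype.card ι + 2) * volume.real (closedBall (0 : EuclideanSpace ℝ ι) R) := by
  have : Nonempty ι := ⟨i⟩
  have : Nontrivial (EuclideanSpace ℝ ι) :=
    ⟨⟨single i 1, 0, fun h => by simpa using congrArg (· i) h⟩⟩
  have hcard : (Fintype.card ι : ℝ) ≠ 0 := by positivity
  have hsum : Fintype.card ι * ∫ x in closedBall (0 : EuclideanSpace ℝ ι) R, x i ^ 2
      = ∫ x in closedBall (0 : EuclideanSpace ℝ ι) R, ‖x‖ ^ 2 := by
    simp_rw [norm_sq_eq, Real.norm_eq_abs, sq_abs]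
    rw [integral_finsetSum _ fun j _ =>
      (Continuous.continuousOn (by fun_prop)).integrableOn_compact (isCompact_closedBall _ _)]
    simp [setIntegral_closedBall_sq_apply_eq R _ i]
  rw [setIntegral_closedBall_norm_sq volume hR, finrank_euclideanSpace] at hsum
  rw [← mul_right_inj' hcard, hsum]
  ring

noncomputable def negCoord (i : ι) : EuclideanSpace ℝ ι ≃ₗᵢ[ℝ] EuclideanSpace ℝ ι :=
  LinearIsometryEquiv.piLpCongrRight 2
    fun j => if j = i then LinearIsometryEquiv.neg ℝ else LinearIsometryEquiv.refl ℝ ℝ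

theorem negCoord_apply (i j : ι) (x : EuclideanSpace ℝ ι) :
    negCoord i x j = if j = i then -x j else x j := by
  by_cases h : j = i <;> simp [negCoord, h]

theorem setIntegral_mul_apply_eq_zero {s : Set (EuclideanSpace ℝ ι)} {i k : ι}
    (hs : negCoord i ⁻¹' s = s) (hik : i ≠ k) : ∫ y in s, y i * y k = 0 :=
  setIntegral_eq_zero_of_comp_eq_neg (f := (negCoord i).toMeasurableEquiv)
    (negCoord i).measurePreserving hs fun y => by
      simp [negCoord_apply, hik.symm]

theorem setIntegral_inner_sq {s : Set (EuclideanSpace ℝ ι)} (hs : IsCompact s)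
    (hsymm : ∀ i, negCoord i ⁻¹' s = s) (v : EuclideanSpace ℝ ι) :
    ∫ y in s, ⟪v, y⟫ ^ 2 = ∑ i, v i ^ 2 * ∫ y in s, y i ^ 2 := by
  have hint : ∀ {f : EuclideanSpace ℝ ι → ℝ}, Continuous f → IntegrableOn f s :=
    fun hf => hf.continuousOn.integrableOn_compact hs
  have hexpand : ∀ y : EuclideanSpace ℝ ι,
      ⟪v, y⟫ ^ 2 = ∑ i, ∑ k, v i * v k * (y i * y k) := fun y => by
    simp only [PiLp.inner_apply, RCLike.inner_apply, conj_trivial, sq, Finset.sum_mul_sum]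
    exact Finset.sum_congr rfl fun i _ => Finset.sum_congr rfl fun k _ => by ring
  simp_rw [hexpand]
  rw [integral_finsetSum _ fun i _ => hint (by fun_prop)]
  refine Finset.sum_congr rfl fun i _ => ?_
  rw [integral_finsetSum _ fun k _ => hint (by fun_prop), Finset.sum_eq_single i]
  · simp only [integral_const_mul, sq]
  · intro k _ hki
    rw [integral_const_mul, setIntegral_mul_apply_eq_zero (hsymm i) hki.symm, mul_zero]
  · simp

end EuclideanSpace

section Cylinder

variable {d D : ℕ} {r w : ℝ}

theorem card_subtype_val_lt (h : d ≤ D) : Fintype.card {i : Fin D // (i : ℕ) < d} = d := by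
  rw [Fintype.card_subtype, Fin.card_filter_val_lt, min_eq_right h]

theorem cylinder_eq_preimage :
    cylinder d D r w = EuclideanSpace.measurableEquivProdSubtype (fun i : Fin D => (i : ℕ) < d) ⁻¹'
      (closedBall 0 |r| ×ˢ closedBall 0 |w|) := by
  have hge : ∀ i : Fin D, d ≤ (i : ℕ) ↔ ¬(i : ℕ) < d := fun _ => not_lt.symm
  ext y
  simp only [_root_.cylinder, hge, Set.mem_ofPred_eq, Set.mem_preimage, Set.mem_prod,
    ← EuclideanSpace.sum_sq_le_sq_iff_mem_closedBall,
    EuclideanSpace.measurableEquivProdSubtype_fst_apply,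
    EuclideanSpace.measurableEquivProdSubtype_snd_apply]
  simp only [← Finset.sum_subtype_eq_sum_filter, Finset.subtype_univ]

theorem isCompact_cylinder : IsCompact (cylinder d D r w) := by
  have hclosed : IsClosed (cylinder d D r w) := by
    simp only [_root_.cylinder, Set.ofPred_and]
    exact (isClosed_le (by fun_prop) continuous_const).inter
      (isClosed_le (by fun_prop) continuous_const)
  refine isCompact_of_isClosed_isBounded hclosed
    ((isBounded_closedBall (x := 0) (r := √(r ^ 2 + w ^ 2))).subset fun y hy => ?_)
  rw [mem_closedBall_zero_iff, Real.le_sqrt (norm_nonneg _) (by positivity),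
    EuclideanSpace.norm_sq_eq,
    ← Finset.sum_filter_add_sum_filter_not _ fun i : Fin D => (i : ℕ) < d]
  simp only [Real.norm_eq_abs, sq_abs, not_lt]
  exact add_le_add hy.1 hy.2

theorem integrableOn_cylinder {f : EuclideanSpace ℝ (Fin D) → ℝ} (hf : Continuous f) :
    IntegrableOn f (cylinder d D r w) :=
  hf.continuousOn.integrableOn_compact isCompact_cylinder

theorem negCoord_preimage_cylinder (i : Fin D) :
    EuclideanSpace.negCoord i ⁻¹' cylinder d D r w = cylinder d D r w := by
  ext y
  simp [_root_.cylinder, EuclideanSpace.negCoord_apply, apply_ite (· ^ 2)]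

theorem neg_cylinder : -cylinder d D r w = cylinder d D r w := by
  ext y
  simp [_root_.cylinder]

theorem volume_cylinder :
    volume.real (cylinder d D r w)
      = volume.real (closedBall (0 : EuclideanSpace ℝ {i : Fin D // (i : ℕ) < d}) |r|)
        * volume.real (closedBall (0 : EuclideanSpace ℝ {i : Fin D // ¬(i : ℕ) < d}) |w|) := by
  rw [measureReal_def, cylinder_eq_preimage,
    EuclideanSpace.volume_preimage_measurableEquivProdSubtype_prod measurableSet_closedBall
      measurableSet_closedBall, ENNReal.toReal_mul]
  rfl

theorem setIntegral_cylinder_sq_apply_of_lt (hdD : d ≤ D) {i : Fin D} (hi : (i : ℕ) < d) :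
    ∫ y in cylinder d D r w, y i ^ 2 = r ^ 2 / (d + 2) * volume.real (cylinder d D r w) := by
  rw [volume_cylinder, cylinder_eq_preimage]
  refine (EuclideanSpace.setIntegral_preimage_measurableEquivProdSubtype_fst _ _
    fun x => x ⟨i, hi⟩ ^ 2).trans ?_
  rw [EuclideanSpace.setIntegral_closedBall_sq_apply (abs_nonneg r), card_subtype_val_lt hdD,
    sq_abs]
  ring

theorem setIntegral_cylinder_sq_apply_of_le (hdD : d ≤ D) {i : Fin D} (hi : d ≤ (i : ℕ)) :
    ∫ y in cylinder d D r w, y i ^ 2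
      = w ^ 2 / (((D - d : ℕ) : ℝ) + 2) * volume.real (cylinder d D r w) := by
  have hi' : ¬(i : ℕ) < d := not_lt.2 hi
  rw [volume_cylinder, cylinder_eq_preimage]
  refine (EuclideanSpace.setIntegral_preimage_measurableEquivProdSubtype_snd _ _
    fun x => x ⟨i, hi'⟩ ^ 2).trans ?_
  rw [EuclideanSpace.setIntegral_closedBall_sq_apply (abs_nonneg w), Fintype.card_subtype_compl,
    card_subtype_val_lt hdD, Fintype.card_fin, sq_abs]
  ring

theorem le_setIntegral_cylinder_inner_sub_sq (hdD : d ≤ D)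
    (hbal : w ^ 2 / (((D - d : ℕ) : ℝ) + 2) ≤ r ^ 2 / ((d : ℝ) + 2))
    (v p : EuclideanSpace ℝ (Fin D)) :
    w ^ 2 / (((D - d : ℕ) : ℝ) + 2) * volume.real (cylinder d D r w) * ‖v‖ ^ 2
      ≤ ∫ y in cylinder d D r w, ⟪v, y - p⟫ ^ 2 := by
  set c := w ^ 2 / (((D - d : ℕ) : ℝ) + 2) * volume.real (cylinder d D r w)
  have hmoment : ∀ i : Fin D, c ≤ ∫ y in cylinder d D r w, y i ^ 2 := by
    intro i
    rcases lt_or_ge (i : ℕ) d with hi | hi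
    · rw [setIntegral_cylinder_sq_apply_of_lt hdD hi]
      exact mul_le_mul_of_nonneg_right hbal measureReal_nonneg
    · rw [setIntegral_cylinder_sq_apply_of_le hdD hi]
  rw [setIntegral_inner_sub_sq isCompact_cylinder neg_cylinder,
    EuclideanSpace.setIntegral_inner_sq isCompact_cylinder negCoord_preimage_cylinder]
  calc c * ‖v‖ ^ 2 = ∑ i, v i ^ 2 * c := by
        rw [EuclideanSpace.norm_sq_eq, Finset.mul_sum]
        simp [mul_comm]
    _ ≤ ∑ i, v i ^ 2 * ∫ y in cylinder d D r w, y i ^ 2 :=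
        Finset.sum_le_sum fun i _ => mul_le_mul_of_nonneg_left (hmoment i) (sq_nonneg _)
    _ ≤ _ := le_add_of_nonneg_right (by positivity)

theorem le_setIntegral_cylinder_infDist_sq (hdD : d ≤ D)
    (hbal : w ^ 2 / (((D - d : ℕ) : ℝ) + 2) ≤ r ^ 2 / ((d : ℝ) + 2))
    {L : AffineSubspace ℝ (EuclideanSpace ℝ (Fin D))} (hL : finrank ℝ L.direction = d)
    (hne : (L : Set (EuclideanSpace ℝ (Fin D))).Nonempty) :
    ((D - d : ℕ) : ℝ) / (((D - d : ℕ) : ℝ) + 2) * w ^ 2 * volume.real (cylinder d D r w)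
      ≤ ∫ y in cylinder d D r w, infDist y L ^ 2 := by
  obtain ⟨p, hp⟩ := hne
  let b := stdOrthonormalBasis ℝ L.directionᗮ
  have hK : finrank ℝ L.directionᗮ = D - d := by
    have := L.direction.finrank_add_finrank_orthogonal
    rw [hL, finrank_euclideanSpace_fin] at this
    omega
  calc _ = ∑ j, w ^ 2 / (((D - d : ℕ) : ℝ) + 2) * volume.real (cylinder d D r w)
        * ‖(b j : EuclideanSpace ℝ (Fin D))‖ ^ 2 := by
        simp [Submodule.norm_coe, b.orthonormal.1 _, hK]
        ring
    _ ≤ ∑ j, ∫ y in cylinder d D r w, ⟪(b j : EuclideanSpace ℝ (Fin D)), y - p⟫ ^ 2 :=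
        Finset.sum_le_sum fun j _ => le_setIntegral_cylinder_inner_sub_sq hdD hbal _ p
    _ = ∫ y in cylinder d D r w, ∑ j, ⟪(b j : EuclideanSpace ℝ (Fin D)), y - p⟫ ^ 2 :=
        (integral_finsetSum _ fun j _ => integrableOn_cylinder (by fun_prop)).symm
    _ ≤ _ := setIntegral_mono_on (integrableOn_cylinder (by fun_prop))
        (integrableOn_cylinder ((continuous_infDist_pt _).pow 2))
        isCompact_cylinder.measurableSet fun y _ =>
          sum_inner_sq_le_infDist_sq (b.orthonormal.comp_linearIsometry L.directionᗮ.subtypeₗᵢ)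
            (fun j => (b j).2) hp y

end Cylinder

noncomputable def tailCoords (d D : ℕ) :
    EuclideanSpace ℝ (Fin D) →ₗ[ℝ] ({i : Fin D // ¬(i : ℕ) < d} → ℝ) :=
  LinearMap.funLeft ℝ ℝ Subtype.val ∘ₗ (WithLp.linearEquiv 2 ℝ (Fin D → ℝ)).toLinearMap

theorem tailCoords_surjective (d D : ℕ) : Function.Surjective (tailCoords d D) :=
  (LinearMap.funLeft_surjective_of_injective ℝ ℝ _ Subtype.val_injective).comp
    (WithLp.linearEquiv 2 ℝ (Fin D → ℝ)).surjective

noncomputable def axis (d D : ℕ) : AffineSubspace ℝ (EuclideanSpace ℝ (Fin D)) :=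
  (LinearMap.ker (tailCoords d D)).toAffineSubspace

section Axis

variable {d D : ℕ}

theorem mem_axis {y : EuclideanSpace ℝ (Fin D)} :
    y ∈ axis d D ↔ ∀ i : Fin D, d ≤ (i : ℕ) → y i = 0 := by
  simp [axis, Submodule.mem_toAffineSubspace, tailCoords, funext_iff, LinearMap.funLeft]

theorem finrank_direction_axis (h : d ≤ D) : finrank ℝ (axis d D).direction = d := by
  have := LinearMap.finrank_range_add_finrank_ker (tailCoords d D)
  rw [LinearMap.range_eq_top_of_surjective _ (tailCoords_surjective d D), finrank_top,
    Module.finrank_fintype_fun_eq_card, Fintype.card_subtype_compl, card_subtype_val_lt h,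
    finrank_euclideanSpace_fin, Fintype.card_fin] at this
  rw [axis, Submodule.toAffineSubspace_direction]
  omega

theorem infDist_axis_sq_le (y : EuclideanSpace ℝ (Fin D)) :
    infDist y (axis d D) ^ 2
      ≤ ∑ i ∈ Finset.univ.filter (fun i : Fin D => d ≤ (i : ℕ)), y i ^ 2 := by
  set z : EuclideanSpace ℝ (Fin D) := WithLp.toLp 2 fun i => if (i : ℕ) < d then y i else 0
  have hz : z ∈ axis d D := mem_axis.2 fun i hi => by simp [z, not_lt.2 hi]
  calc infDist y (axis d D) ^ 2 ≤ dist y z ^ 2 :=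
        pow_le_pow_left₀ infDist_nonneg (infDist_le_dist_of_mem hz) 2
    _ = _ := by
      rw [EuclideanSpace.dist_eq, Real.sq_sqrt (by positivity), Finset.sum_filter]
      refine Finset.sum_congr rfl fun i _ => ?_
      by_cases hi : (i : ℕ) < d <;> simp [z, hi, sq_abs]

theorem setIntegral_cylinder_infDist_axis_sq_le (hdD : d ≤ D) (r w : ℝ) :
    ∫ y in cylinder d D r w, infDist y (axis d D) ^ 2
      ≤ ((D - d : ℕ) : ℝ) / (((D - d : ℕ) : ℝ) + 2) * w ^ 2 * volume.real (cylinder d D r w) := by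
  have hcard : (Finset.univ.filter fun i : Fin D => d ≤ (i : ℕ)).card = D - d := by
    simpa [Fintype.card_subtype, card_subtype_val_lt hdD] using
      Fintype.card_subtype_compl (fun i : Fin D => (i : ℕ) < d)
  calc ∫ y in cylinder d D r w, infDist y (axis d D) ^ 2
      ≤ ∫ y in cylinder d D r w,
          ∑ i ∈ Finset.univ.filter (fun i : Fin D => d ≤ (i : ℕ)), y i ^ 2 :=
        setIntegral_mono_on (integrableOn_cylinder ((continuous_infDist_pt _).pow 2))
          (integrableOn_cylinder (by fun_prop))
          isCompact_cylinder.measurableSet fun y _ => infDist_axis_sq_le y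
    _ = ∑ i ∈ Finset.univ.filter (fun i : Fin D => d ≤ (i : ℕ)),
          ∫ y in cylinder d D r w, y i ^ 2 :=
        integral_finsetSum _ fun i _ => integrableOn_cylinder (by fun_prop)
    _ = ∑ i ∈ Finset.univ.filter (fun i : Fin D => d ≤ (i : ℕ)),
          w ^ 2 / (((D - d : ℕ) : ℝ) + 2) * volume.real (cylinder d D r w) :=
        Finset.sum_congr rfl fun i hi =>
          setIntegral_cylinder_sq_apply_of_le hdD (Finset.mem_filter.1 hi).2
    _ = _ := by
        rw [Finset.sum_const, hcard, nsmul_eq_mul]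
        ring

end Axis

theorem best_fit_flat_cylinder (d D : ℕ) (hdD : d < D) (r w : ℝ)
    (hbal : w ^ 2 / ((D - d : ℕ) + 2 : ℝ) ≤ r ^ 2 / ((d : ℝ) + 2)) :
    sInf { s : ℝ | ∃ L : AffineSubspace ℝ (EuclideanSpace ℝ (Fin D)),
        Module.finrank ℝ L.direction = d ∧
        (L : Set (EuclideanSpace ℝ (Fin D))).Nonempty ∧
        s = ∫ y in cylinder d D r w,
          infDist y (L : Set (EuclideanSpace ℝ (Fin D))) ^ 2 } =
      (((D - d : ℕ) : ℝ) / (((D - d : ℕ) : ℝ) + 2)) * w ^ 2 *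
        (volume (cylinder d D r w)).toReal ∧
    ∃ L₁ : AffineSubspace ℝ (EuclideanSpace ℝ (Fin D)),
      Module.finrank ℝ L₁.direction = d ∧
      (L₁ : Set (EuclideanSpace ℝ (Fin D))) = {y | ∀ i : Fin D, d ≤ (i : ℕ) → y i = 0} ∧
      ∫ y in cylinder d D r w, infDist y (L₁ : Set (EuclideanSpace ℝ (Fin D))) ^ 2 =
        (((D - d : ℕ) : ℝ) / (((D - d : ℕ) : ℝ) + 2)) * w ^ 2 *
          (volume (cylinder d D r w)).toReal := by
  have hL₁ := finrank_direction_axis hdD.le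
  have hne₁ : (axis d D : Set (EuclideanSpace ℝ (Fin D))).Nonempty :=
    ⟨0, mem_axis.2 fun _ _ => rfl⟩
  have hbest := le_antisymm (setIntegral_cylinder_infDist_axis_sq_le hdD.le r w)
    (le_setIntegral_cylinder_infDist_sq hdD.le hbal hL₁ hne₁)
  refine ⟨IsLeast.csInf_eq ⟨⟨_, hL₁, hne₁, hbest.symm⟩, ?_⟩, _, hL₁, ?_, hbest⟩
  · rintro s ⟨L, hL, hne, rfl⟩
    exact le_setIntegral_cylinder_infDist_sq hdD.le hbal hL hne
  · ext y
    exact mem_axis
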